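/- arXiv:2011.12173 — 2 statements merged into one kernel-verified Lean document; each statement's English description precedes it below -/
import Mathlib

section
/- Let S be a nonempty finite set, let ν and μ be probability distributions on S with μ(x) > 0 for every x ∈ S, let ε ∈ (0,1], and let f : S → [0,1] satisfy E_μ[f] − E_ν[f] ≥ ε. Define the updated distribution μ'(x) = μ(x)·exp(−(ε/4)·f(x)) / Z, where Z = Σ_{y∈S} μ(y)·exp(−(ε/4)·f(y)). Then D(ν‖μ') ≤ D(ν‖μ) − ε²/16. -/
open Finset

noncomputable section

/-- Expectation of `f` under a distribution `μ` on a finite type. -/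
def expect {S : Type*} [Fintype S] (μ f : S → ℝ) : ℝ := ∑ x, μ x * f x

/-- Relative entropy (KL divergence, natural logarithm). -/
def klDiv {S : Type*} [Fintype S] (ν μ : S → ℝ) : ℝ := ∑ x, ν x * Real.log (ν x / μ x)

/-- `μ` is a probability distribution on the finite type `S`. -/
def IsProbDist {S : Type*} [Fintype S] (μ : S → ℝ) : Prop :=
  (∀ x, 0 ≤ μ x) ∧ ∑ x, μ x = 1

lemma exp_neg_le_quad (t : ℝ) (ht : 0 ≤ t) : Real.exp (-t) ≤ 1 - t + t ^ 2 := by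
  have h1 : Real.exp (-t) ≤ (1 + t)⁻¹ := by
    rw [Real.exp_neg]
    have h := Real.add_one_le_exp t
    have hpos : (0:ℝ) < 1 + t := by linarith
    exact inv_anti₀ hpos (by linarith)
  have h2 : (1 + t)⁻¹ ≤ 1 - t + t ^ 2 := by
    rw [inv_le_iff_one_le_mul₀ (by linarith : (0:ℝ) < 1 + t)]
    nlinarith [pow_nonneg ht 3]
  linarith

/-- Single-step mirror descent progress inequality. -/
theorem mirror_descent_step {S : Type*} [Fintype S] [Nonempty S]
    (ν μ : S → ℝ) (hν : IsProbDist ν) (hμ : IsProbDist μ)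
    (hμpos : ∀ x, 0 < μ x)
    (ε : ℝ) (hε : ε ∈ Set.Ioc (0 : ℝ) 1)
    (f : S → ℝ) (hf : ∀ x, f x ∈ Set.Icc (0 : ℝ) 1)
    (hsep : expect μ f - expect ν f ≥ ε)
    (Z : ℝ) (hZ : Z = ∑ y, μ y * Real.exp (-(ε / 4) * f y))
    (μ' : S → ℝ) (hμ' : ∀ x, μ' x = μ x * Real.exp (-(ε / 4) * f x) / Z) :
    klDiv ν μ' ≤ klDiv ν μ - ε ^ 2 / 16 := by
  obtain ⟨hε0, hε1⟩ := hε
  have hc0 : (0:ℝ) < ε / 4 := by linarith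
  have hZpos : 0 < Z := by
    rw [hZ]
    exact Finset.sum_pos (fun x _ => mul_pos (hμpos x) (Real.exp_pos _))
      Finset.univ_nonempty
  -- key identity
  have key : klDiv ν μ' = klDiv ν μ + (ε / 4) * expect ν f + Real.log Z := by
    have h1 : klDiv ν μ' = ∑ x, (ν x * Real.log (ν x / μ x)
        + (ε / 4) * (ν x * f x) + ν x * Real.log Z) := by
      unfold klDiv
      apply Finset.sum_congr rfl
      intro x _
      rcases (hν.1 x).lt_or_eq with h | h
      · have hμx := hμpos x
        rw [hμ' x]
        have heq : ν x / (μ x * Real.exp (-(ε / 4) * f x) / Z)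
            = (ν x / μ x) * Real.exp ((ε / 4) * f x) * Z := by
          rw [show -(ε / 4) * f x = -((ε / 4) * f x) by ring, Real.exp_neg]
          field_simp
        rw [heq, Real.log_mul (by positivity) (ne_of_gt hZpos),
          Real.log_mul (by positivity) (Real.exp_ne_zero _), Real.log_exp]
        ring
      · simp [← h]
    rw [h1]
    unfold klDiv _root_.expect
    rw [Finset.sum_add_distrib, Finset.sum_add_distrib, ← Finset.mul_sum,
      ← Finset.sum_mul, hν.2, one_mul]
  -- bound on Z
  have hZle : Z ≤ 1 - (ε / 4) * expect μ f + (ε / 4) ^ 2 := by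
    rw [hZ]
    have hb : ∀ x ∈ Finset.univ, μ x * Real.exp (-(ε / 4) * f x)
        ≤ μ x * (1 - (ε / 4) * f x + (ε / 4) ^ 2 * f x) := by
      intro x _
      apply mul_le_mul_of_nonneg_left _ (hμpos x).le
      have hfx := hf x
      have ht : 0 ≤ (ε / 4) * f x := mul_nonneg hc0.le (hf x).1
      have := exp_neg_le_quad ((ε / 4) * f x) ht
      rw [show -(ε / 4) * f x = -((ε / 4) * f x) by ring]
      have hsq : ((ε / 4) * f x) ^ 2 ≤ (ε / 4) ^ 2 * f x := by
        have : f x ^ 2 ≤ f x := by nlinarith [hfx.1, hfx.2]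
        nlinarith [sq_nonneg (ε / 4)]
      linarith
    calc ∑ y, μ y * Real.exp (-(ε / 4) * f y)
        ≤ ∑ y, μ y * (1 - (ε / 4) * f y + (ε / 4) ^ 2 * f y) :=
          Finset.sum_le_sum hb
      _ = (∑ y, μ y) - (ε / 4) * expect μ f + (ε / 4) ^ 2 * expect μ f := by
          unfold _root_.expect
          rw [Finset.mul_sum, Finset.mul_sum, ← Finset.sum_sub_distrib,
            ← Finset.sum_add_distrib]
          apply Finset.sum_congr rfl
          intro x _; ring
      _ = 1 - (ε / 4) * expect μ f + (ε / 4) ^ 2 * expect μ f := by rw [hμ.2]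
      _ ≤ 1 - (ε / 4) * expect μ f + (ε / 4) ^ 2 := by
          have hEle : expect μ f ≤ 1 := by
            rw [← hμ.2]
            apply Finset.sum_le_sum
            intro x _
            nlinarith [(hf x).2, (hμpos x).le]
          nlinarith [sq_nonneg (ε / 4)]
  have hlogZ : Real.log Z ≤ Z - 1 := Real.log_le_sub_one_of_pos hZpos
  rw [key]
  have hmul : (ε / 4) * (expect ν f - expect μ f) ≤ (ε / 4) * (-ε) := by
    apply mul_le_mul_of_nonneg_left _ hc0.le
    linarith
  nlinarith [hmul]
end
end

section
/- Fix n ≥ 1, ε ∈ (0,1], a probability distribution ν on {0,1}^n, and functions f_1,…,f_t : {0,1}^n → [0,1]. Define the mirror descent iterates μ_0 = U and, for 1 ≤ s ≤ t, μ_s(x) = exp(−(ε/4)·Σ_{i=1}^{s} f_i(x)) / Z_s with Z_s = Σ_{x∈{0,1}^n} exp(−(ε/4)·Σ_{i=1}^{s} f_i(x)). Suppose that for every 1 ≤ i ≤ t, E_{μ_{i−1}}[f_i] − E_ν[f_i] ≥ ε. Then (i) ‖μ_t − ν‖_TV ≤ √(2·(D(ν‖U) − t·ε²/16)), and (ii)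 in particular t ≤ 16·ε^{−2}·D(ν‖U), so the verification game with mirror descent updates lasts at most 16·ε^{−2}·D(ν‖U) rounds. -/
open Finset

noncomputable section

/-- Total variation distance. -/
def tvDist {S : Type*} [Fintype S] (μ ν : S → ℝ) : ℝ := (1 / 2) * ∑ x, |μ x - ν x|

/-- The uniform distribution on `{0,1}^n`. -/
def uniformBn (n : ℕ) : (Fin n → Bool) → ℝ := fun _ => ((2 : ℝ) ^ n)⁻¹

/-- The `s`-th mirror descent iterate: the Gibbs distribution
`μ_s(x) = exp(-(ε/4)·∑_{i<s} f_i(x)) / Z_s`.  For `s = 0` this is the uniform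
distribution on `{0,1}^n`. -/
def mdIter (n : ℕ) (ε : ℝ) (f : ℕ → (Fin n → Bool) → ℝ) (s : ℕ) :
    (Fin n → Bool) → ℝ :=
  fun x => Real.exp (-(ε / 4) * ∑ i ∈ Finset.range s, f i x) /
    ∑ y, Real.exp (-(ε / 4) * ∑ i ∈ Finset.range s, f i y)

/-!
With `η = ε/4` the iterates are Gibbs distributions with `μ_{s+1} ∝ μ_s · e^{-η f_s}`, so
`D(ν‖μ_{s+1}) - D(ν‖μ_s) = η E_ν[f_s] + log E_{μ_s}[e^{-η f_s}]`. Since `e^{-u} ≤ 1 - u + u²` for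
`u ≥ 0` and `log x ≤ x - 1`, the second term is at most `-η E_{μ_s}[f_s] + η²`, so the
`ε`-advantage of `f_s` makes the potential drop by at least `ηε - η² ≥ ε²/16`, whence
`D(ν‖μ_t) ≤ D(ν‖U) - tε²/16`. The left side is nonnegative, which bounds `t`, and Pinsker's
inequality, in the weak form `TV² ≤ H² ≤ D` through the squared Hellinger distance `H²`, gives
the total variation bound.
-/

open Real

lemma exp_neg_le_one_sub_add_sq {u : ℝ} (hu : 0 ≤ u) : exp (-u) ≤ 1 - u + u ^ 2 := by
  have hinv : exp (-u) * exp u = 1 := by rw [← exp_add, neg_add_cancel, exp_zero]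
  nlinarith [mul_le_mul_of_nonneg_left (add_one_le_exp u) (exp_pos (-u)).le, exp_pos (-u)]

lemma sq_sub_sqrt_add_sub_le_mul_log {a b : ℝ} (ha : 0 ≤ a) (hb : 0 < b) :
    (√a - √b) ^ 2 + (a - b) ≤ a * log (a / b) := by
  rcases ha.eq_or_lt with rfl | ha
  · simp [sq_sqrt hb.le]
  obtain ⟨p, hp, rfl⟩ : ∃ p, 0 < p ∧ p ^ 2 = a := ⟨√a, sqrt_pos.2 ha, sq_sqrt ha.le⟩
  obtain ⟨q, hq, rfl⟩ : ∃ q, 0 < q ∧ q ^ 2 = b := ⟨√b, sqrt_pos.2 hb, sq_sqrt hb.le⟩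
  have hlog : 1 - q / p ≤ log (p / q) := by
    simpa using one_sub_inv_le_log_of_pos (div_pos hp hq)
  calc (√(p ^ 2) - √(q ^ 2)) ^ 2 + (p ^ 2 - q ^ 2) = 2 * p ^ 2 * (1 - q / p) := by
        rw [sqrt_sq hp.le, sqrt_sq hq.le]; field_simp; ring
    _ ≤ 2 * p ^ 2 * log (p / q) := by gcongr
    _ = p ^ 2 * log (p ^ 2 / q ^ 2) := by rw [← div_pow, log_pow]; push_cast; ring

section FiniteDistributions

variable {S : Type*} [Fintype S]

def sqHellinger (μ ν : S → ℝ) : ℝ := ∑ x, (√(μ x) - √(ν x)) ^ 2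

lemma tvDist_sq_le_sqHellinger {μ ν : S → ℝ} (hμ : IsProbDist μ) (hν : IsProbDist ν) :
    tvDist μ ν ^ 2 ≤ sqHellinger ν μ := by
  have hfactor : ∀ x, |μ x - ν x| = |√(ν x) - √(μ x)| * (√(ν x) + √(μ x)) := fun x => by
    rw [← abs_of_nonneg (by positivity : 0 ≤ √(ν x) + √(μ x)), ← abs_mul, abs_sub_comm]
    congr 1
    linear_combination sq_sqrt (hμ.1 x) - sq_sqrt (hν.1 x)
  have hsum : ∑ x, (√(ν x) + √(μ x)) ^ 2 ≤ 4 := calc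
    ∑ x, (√(ν x) + √(μ x)) ^ 2 ≤ ∑ x, 2 * (ν x + μ x) := by
      refine sum_le_sum fun x _ => ?_
      nlinarith [sq_nonneg (√(ν x) - √(μ x)), sq_sqrt (hν.1 x), sq_sqrt (hμ.1 x)]
    _ = 4 := by rw [← mul_sum, sum_add_distrib, hν.2, hμ.2]; norm_num
  have hCS := sum_mul_sq_le_sq_mul_sq univ (fun x => |√(ν x) - √(μ x)|)
    (fun x => √(ν x) + √(μ x))
  simp only [← hfactor, sq_abs] at hCS
  have hH : 0 ≤ sqHellinger ν μ := sum_nonneg fun x _ => sq_nonneg _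
  have hL1 : (∑ x, |μ x - ν x|) ^ 2 ≤ sqHellinger ν μ * 4 :=
    hCS.trans (mul_le_mul_of_nonneg_left hsum hH)
  rw [tvDist, mul_pow]
  linarith

lemma sqHellinger_le_klDiv {μ ν : S → ℝ} (hμ : IsProbDist μ) (hμpos : ∀ x, 0 < μ x)
    (hν : IsProbDist ν) : sqHellinger ν μ ≤ klDiv ν μ := calc
  sqHellinger ν μ = ∑ x, ((√(ν x) - √(μ x)) ^ 2 + (ν x - μ x)) := by
    rw [sum_add_distrib, sum_sub_distrib, hν.2, hμ.2, sub_self, add_zero, sqHellinger]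
  _ ≤ klDiv ν μ := sum_le_sum fun x _ => sq_sub_sqrt_add_sub_le_mul_log (hν.1 x) (hμpos x)

/-- Pinsker's inequality, with a weaker constant. -/
lemma tvDist_sq_le_klDiv {μ ν : S → ℝ} (hμ : IsProbDist μ) (hμpos : ∀ x, 0 < μ x)
    (hν : IsProbDist ν) : tvDist μ ν ^ 2 ≤ klDiv ν μ :=
  (tvDist_sq_le_sqHellinger hμ hν).trans (sqHellinger_le_klDiv hμ hμpos hν)

lemma klDiv_eq_add_sum_mul_log_sub {ν μ μ' : S → ℝ} (hμ : ∀ x, 0 < μ x) (hμ' : ∀ x, 0 < μ' x) :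
    klDiv ν μ' = klDiv ν μ + ∑ x, ν x * (log (μ x) - log (μ' x)) := by
  rw [klDiv, klDiv, ← sum_add_distrib]
  refine sum_congr rfl fun x _ => ?_
  rcases eq_or_ne (ν x) 0 with h | h
  · simp [h]
  · rw [log_div h (hμ' x).ne', log_div h (hμ x).ne']; ring

lemma log_expect_exp_neg_le {μ g : S → ℝ} {η : ℝ} (hμ : IsProbDist μ) (hη : 0 ≤ η)
    (hg : ∀ x, g x ∈ Set.Icc (0 : ℝ) 1) :
    log (expect μ fun x => exp (-(η * g x))) ≤ -(η * expect μ g) + η ^ 2 := by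
  have hpos : 0 < expect μ fun x => exp (-(η * g x)) := by
    have : exp (-η) ≤ expect μ fun x => exp (-(η * g x)) := calc
      exp (-η) = ∑ x, μ x * exp (-η) := by rw [← sum_mul, hμ.2, one_mul]
      _ ≤ _ := sum_le_sum fun x _ => mul_le_mul_of_nonneg_left
        (exp_le_exp.2 (by nlinarith [(hg x).2])) (hμ.1 x)
    exact (exp_pos _).trans_le this
  refine (log_le_sub_one_of_pos hpos).trans ?_
  have hpt : ∀ x, exp (-(η * g x)) ≤ 1 - η * g x + η ^ 2 := fun x => by
    have hηg : η * g x ≤ η := mul_le_of_le_one_right hη (hg x).2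
    calc exp (-(η * g x)) ≤ 1 - η * g x + (η * g x) ^ 2 :=
          exp_neg_le_one_sub_add_sq (mul_nonneg hη (hg x).1)
      _ ≤ 1 - η * g x + η ^ 2 := by gcongr; exact mul_nonneg hη (hg x).1
  calc (expect μ fun x => exp (-(η * g x))) - 1
      ≤ ∑ x, μ x * (1 - η * g x + η ^ 2) - 1 :=
        sub_le_sub_right (sum_le_sum fun x _ => mul_le_mul_of_nonneg_left (hpt x) (hμ.1 x)) _
    _ = -(η * expect μ g) + η ^ 2 := by
        have hlin : ∑ x, μ x * (1 - η * g x + η ^ 2) =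
            (1 + η ^ 2) * ∑ x, μ x - η * ∑ x, μ x * g x := by
          rw [mul_sum, mul_sum, ← sum_sub_distrib]
          exact sum_congr rfl fun x _ => by ring
        rw [hlin, hμ.2, _root_.expect]
        ring

def gibbs (φ : S → ℝ) (x : S) : ℝ := exp (φ x) / ∑ y, exp (φ y)

variable [Nonempty S]

lemma sum_exp_pos (φ : S → ℝ) : 0 < ∑ y, exp (φ y) :=
  sum_pos (fun _ _ => exp_pos _) univ_nonempty

lemma gibbs_pos (φ : S → ℝ) (x : S) : 0 < gibbs φ x :=
  div_pos (exp_pos _) (sum_exp_pos φ)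

lemma isProbDist_gibbs (φ : S → ℝ) : IsProbDist (gibbs φ) :=
  ⟨fun x => (gibbs_pos φ x).le, by simp only [gibbs]; rw [← sum_div, div_self (sum_exp_pos φ).ne']⟩

lemma log_gibbs (φ : S → ℝ) (x : S) : log (gibbs φ x) = φ x - log (∑ y, exp (φ y)) := by
  rw [gibbs, log_div (exp_pos _).ne' (sum_exp_pos φ).ne', log_exp]

lemma klDiv_gibbs_sub_mul {ν : S → ℝ} (hν : ∑ x, ν x = 1) (φ g : S → ℝ) (η : ℝ) :
    klDiv ν (gibbs fun x => φ x - η * g x) =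
      klDiv ν (gibbs φ) + η * expect ν g + log (expect (gibbs φ) fun x => exp (-(η * g x))) := by
  have hratio : (expect (gibbs φ) fun x => exp (-(η * g x))) =
      (∑ y, exp (φ y - η * g y)) / ∑ y, exp (φ y) := by
    simp only [_root_.expect, gibbs, sum_div, div_mul_eq_mul_div, ← exp_add, sub_eq_add_neg]
  rw [klDiv_eq_add_sum_mul_log_sub (gibbs_pos φ) (gibbs_pos _), hratio,
    log_div (sum_exp_pos _).ne' (sum_exp_pos φ).ne']
  have hpt : ∀ x, ν x * ((φ x - log (∑ y, exp (φ y))) -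
      (φ x - η * g x - log (∑ y, exp (φ y - η * g y)))) =
      η * (ν x * g x) + (log (∑ y, exp (φ y - η * g y)) - log (∑ y, exp (φ y))) * ν x :=
    fun x => by ring
  simp only [log_gibbs, hpt, sum_add_distrib, ← mul_sum, hν, _root_.expect]
  ring

lemma klDiv_gibbs_sub_mul_le {ν g : S → ℝ} {η : ℝ} (hν : IsProbDist ν) (hη : 0 ≤ η)
    (hg : ∀ x, g x ∈ Set.Icc (0 : ℝ) 1) (φ : S → ℝ) :
    klDiv ν (gibbs fun x => φ x - η * g x) ≤
      klDiv ν (gibbs φ) - η * (expect (gibbs φ) g - expect ν g) + η ^ 2 := by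
  rw [klDiv_gibbs_sub_mul hν.2]
  linarith [log_expect_exp_neg_le (isProbDist_gibbs φ) hη hg]

end FiniteDistributions

section MirrorDescent

variable {n : ℕ} {ε : ℝ} {f : ℕ → (Fin n → Bool) → ℝ}

lemma mdIter_zero : mdIter n ε f 0 = uniformBn n := by
  funext x
  simp [mdIter, uniformBn, card_univ]

lemma mdIter_eq_gibbs (s : ℕ) :
    mdIter n ε f s = gibbs fun x => -(ε / 4) * ∑ i ∈ range s, f i x :=
  rfl

lemma mdIter_succ (s : ℕ) :
    mdIter n ε f (s + 1) =
      gibbs fun x => -(ε / 4) * ∑ i ∈ range s, f i x - ε / 4 * f s x := by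
  simp only [mdIter_eq_gibbs, sum_range_succ, mul_add, sub_eq_add_neg, neg_mul]

lemma klDiv_mdIter_succ_le {ν : (Fin n → Bool) → ℝ} (hε : 0 < ε) (hν : IsProbDist ν) {s : ℕ}
    (hf : ∀ x, f s x ∈ Set.Icc (0 : ℝ) 1)
    (hsep : expect (mdIter n ε f s) (f s) - expect ν (f s) ≥ ε) :
    klDiv ν (mdIter n ε f (s + 1)) ≤ klDiv ν (mdIter n ε f s) - ε ^ 2 / 16 := by
  have hstep := klDiv_gibbs_sub_mul_le hν (by positivity : 0 ≤ ε / 4) hf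
    (fun x => -(ε / 4) * ∑ i ∈ range s, f i x)
  rw [← mdIter_succ, ← mdIter_eq_gibbs] at hstep
  nlinarith

lemma klDiv_mdIter_le {ν : (Fin n → Bool) → ℝ} (hε : 0 < ε) (hν : IsProbDist ν) {t : ℕ}
    (hf : ∀ i < t, ∀ x, f i x ∈ Set.Icc (0 : ℝ) 1)
    (hsep : ∀ i < t, expect (mdIter n ε f i) (f i) - expect ν (f i) ≥ ε) :
    ∀ s ≤ t, klDiv ν (mdIter n ε f s) ≤ klDiv ν (uniformBn n) - s * ε ^ 2 / 16
  | 0, _ => by simp [mdIter_zero]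
  | s + 1, hs => by
    have hstep := klDiv_mdIter_succ_le hε hν (hf s hs) (hsep s hs)
    have ih := klDiv_mdIter_le hε hν hf hsep s (Nat.le_of_succ_le hs)
    push_cast
    linarith

end MirrorDescent

theorem mirror_descent_tv_and_round_bound_general (n : ℕ)
    (ε : ℝ) (hε : ε ∈ Set.Ioc (0 : ℝ) 1)
    (ν : (Fin n → Bool) → ℝ) (hν : IsProbDist ν)
    (t : ℕ) (f : ℕ → (Fin n → Bool) → ℝ)
    (hf : ∀ i < t, ∀ x, f i x ∈ Set.Icc (0 : ℝ) 1)
    (hsep : ∀ i < t, expect (mdIter n ε f i) (f i) - expect ν (f i) ≥ ε) :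
    tvDist (mdIter n ε f t) ν ≤
        Real.sqrt (2 * (klDiv ν (uniformBn n) - t * ε ^ 2 / 16)) ∧
      (t : ℝ) ≤ 16 / ε ^ 2 * klDiv ν (uniformBn n) := by
  have hε0 := hε.1
  have hpotential := klDiv_mdIter_le hε0 hν hf hsep t le_rfl
  have hpinsker : tvDist (mdIter n ε f t) ν ^ 2 ≤ klDiv ν (mdIter n ε f t) :=
    tvDist_sq_le_klDiv (isProbDist_gibbs _) (gibbs_pos _) hν
  have hdecay : 0 ≤ klDiv ν (uniformBn n) - t * ε ^ 2 / 16 := by nlinarith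
  refine ⟨(le_abs_self _).trans (abs_le_sqrt (by linarith)), ?_⟩
  rw [div_mul_eq_mul_div, le_div_iff₀ (by positivity)]
  linarith

/-- If each `f i` distinguishes the previous mirror descent iterate from `ν` by `ε`,
then the final iterate is `√(2(D(ν‖U) − tε²/16))`-close to `ν` in total variation,
and in particular the game lasts at most `16 ε⁻² D(ν‖U)` rounds. -/
theorem mirror_descent_tv_and_round_bound (n : ℕ) (hn : 1 ≤ n)
    (ε : ℝ) (hε : ε ∈ Set.Ioc (0 : ℝ) 1)
    (ν : (Fin n → Bool) → ℝ) (hν : IsProbDist ν)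
    (t : ℕ) (f : ℕ → (Fin n → Bool) → ℝ)
    (hf : ∀ i < t, ∀ x, f i x ∈ Set.Icc (0 : ℝ) 1)
    (hsep : ∀ i < t, expect (mdIter n ε f i) (f i) - expect ν (f i) ≥ ε) :
    tvDist (mdIter n ε f t) ν ≤
        Real.sqrt (2 * (klDiv ν (uniformBn n) - t * ε ^ 2 / 16)) ∧
      (t : ℝ) ≤ 16 / ε ^ 2 * klDiv ν (uniformBn n) :=
  mirror_descent_tv_and_round_bound_general n ε hε ν hν t f hf hsep
end
end
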